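/- arXiv:2204.08761 — 2 statements merged into one kernel-verified Lean document; each statement's English description precedes it below -/
import Mathlib

section
/- Let B be a Fell bundle over a discrete group G. Every element of the Fourier space A(B) lies in c₀(G, L(B, B_e)): if ξ, η ∈ ℓ²(B), then the coefficient family λ_{ξ,η}, with λ_{ξ,η,s}(b) = ⟨λ_s(b)ξ, η⟩ ∈ B_e, vanishes at infinity, i.e., for every ε > 0 the set {s ∈ G : ‖λ_{ξ,η,s}‖ ≥ ε} is finite. -/
/-
The Hilbert-module Cauchy–Schwarz inequality bounds `‖Σ_{r ∈ t} (b ξ(s⁻¹r))* η(r)‖` by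
`‖ξ‖₂ ‖η‖₂`, uniformly in `t`, `s` and `b` in the unit ball. Choose finite sets `Fξ`, `Fη` off which
the `ℓ²`-tails of `ξ` and `η` are below `δ²`. If `s ∉ Fη Fξ⁻¹`, no `r` has both `r ∈ Fη` and
`s⁻¹r ∈ Fξ`, so splitting the sum according to `r ∈ Fη` and applying Cauchy–Schwarz to each part
gives `‖λ_{ξ,η,s}(b)‖ ≤ δ (‖ξ‖₂ + ‖η‖₂)`.
-/

/-- A Fell bundle over a discrete group `G`: a family of closed subspaces of a
C*-algebra `A` satisfying `B_s B_t ⊆ B_{st}` and `B_s* = B_{s⁻¹}`. -/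
structure FellBundle (G : Type) [Group G] (A : Type) [NormedRing A] [StarRing A]
    [NormedAlgebra ℂ A] where
  fiber : G → Submodule ℂ A
  isClosed : ∀ s, IsClosed (fiber s : Set A)
  mul_mem : ∀ {s t : G} {a b : A}, a ∈ fiber s → b ∈ fiber t → a * b ∈ fiber (s * t)
  star_mem : ∀ {s : G} {a : A}, a ∈ fiber s → star a ∈ fiber s⁻¹

structure FellRep {G A : Type} [Group G] [NormedRing A] [StarRing A] [NormedAlgebra ℂ A]
    (B : FellBundle G A) where
  H : Type
  [instN : NormedAddCommGroup H]
  [instI : InnerProductSpace ℂ H]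
  [instC : CompleteSpace H]
  map : ∀ s : G, (B.fiber s) →ₗ[ℂ] (H →L[ℂ] H)
  map_mul : ∀ (s t : G) (b : B.fiber s) (c : B.fiber t),
    map s b * map t c = map (s * t) ⟨(b : A) * (c : A), B.mul_mem b.2 c.2⟩
  map_star : ∀ (s : G) (b : B.fiber s),
    ContinuousLinearMap.adjoint (map s b) = map s⁻¹ ⟨star (b : A), B.star_mem b.2⟩

attribute [instance] FellRep.instN FellRep.instI FellRep.instC

/-- The coefficient of the regular representation:
`λ_{ξ,η,s}(b) = ⟨λ_s(b)ξ, η⟩ = Σ_r (b ξ(s⁻¹r))* η(r) ∈ B_e`. -/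
noncomputable def regCoeff {G A : Type} [Group G] [NormedRing A] [StarRing A]
    [NormedAlgebra ℂ A] (ξ η : G → A) (s : G) (b : A) : A :=
  ∑' r : G, star (b * ξ (s⁻¹ * r)) * η r

open scoped Pointwise

section CStarAlgebra

variable {A : Type*} [CStarAlgebra A] [PartialOrder A] [StarOrderedRing A] {ι : Type*}

open scoped InnerProductSpace in
lemma norm_sum_star_mul_le (x y : ι → A) (t : Finset ι) :
    ‖∑ r ∈ t, star (x r) * y r‖ ≤
      √‖∑ r ∈ t, star (x r) * x r‖ * √‖∑ r ∈ t, star (y r) * y r‖ := by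
  -- Mathlib's inner product of `A` with itself is `⟪a, b⟫_A = b * star a`, hence the stars.
  let toModule : (ι → A) → WithCStarModule A (t → A) :=
    fun z => (WithCStarModule.equiv _ _).symm fun r => star (z r)
  have inner_eq (z w : ι → A) : ⟪toModule z, toModule w⟫_A = ∑ r ∈ t, star (w r) * z r := by
    rw [WithCStarModule.pi_inner, ← Finset.sum_attach t]
    exact Finset.sum_congr rfl fun r _ => by simp [toModule, WithCStarModule.inner_def]
  have norm_eq (z : ι → A) : ‖toModule z‖ = √‖∑ r ∈ t, star (z r) * z r‖ := by
    rw [WithCStarModule.pi_norm, ← inner_eq]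
    rfl
  have := CStarModule.norm_inner_le (A := A) _ (x := toModule y) (y := toModule x)
  rwa [inner_eq, norm_eq, norm_eq, mul_comm] at this

lemma norm_sum_star_mul_self_le_tsum {x : ι → A} (hx : Summable fun r => star (x r) * x r)
    (u : Finset ι) : ‖∑ r ∈ u, star (x r) * x r‖ ≤ ‖∑' r, star (x r) * x r‖ :=
  CStarAlgebra.norm_le_norm_of_nonneg_of_le (Finset.sum_nonneg fun _ _ => star_mul_self_nonneg _)
    (hx.sum_le_tsum u fun _ _ => star_mul_self_nonneg _)

lemma norm_sum_star_mul_self_left_mul_le {b : A} (hb : ‖b‖ ≤ 1) (x : ι → A) (t : Finset ι) :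
    ‖∑ r ∈ t, star (b * x r) * (b * x r)‖ ≤ ‖∑ r ∈ t, star (x r) * x r‖ := by
  have conj_le :
      ∑ r ∈ t, star (b * x r) * (b * x r) ≤ ‖star b * b‖ • ∑ r ∈ t, star (x r) * x r := by
    rw [Finset.smul_sum]
    refine Finset.sum_le_sum fun r _ => ?_
    rw [star_mul, ← mul_assoc, mul_assoc _ (star b)]
    exact CStarAlgebra.star_left_conjugate_le_norm_smul
  have norm_star_mul_self : ‖star b * b‖ ≤ 1 := by
    rw [CStarRing.norm_star_mul_self]
    exact mul_le_one₀ hb (norm_nonneg b) hb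
  calc ‖∑ r ∈ t, star (b * x r) * (b * x r)‖
      ≤ ‖‖star b * b‖ • ∑ r ∈ t, star (x r) * x r‖ :=
        CStarAlgebra.norm_le_norm_of_nonneg_of_le
          (Finset.sum_nonneg fun _ _ => star_mul_self_nonneg _) conj_le
    _ = ‖star b * b‖ * ‖∑ r ∈ t, star (x r) * x r‖ := by
        rw [norm_smul, norm_norm]
    _ ≤ ‖∑ r ∈ t, star (x r) * x r‖ :=
        mul_le_of_le_one_left (norm_nonneg _) norm_star_mul_self

lemma norm_sum_star_mul_le_of_disjoint_tails {x y : ι → A} {X Y δ : ℝ} {Sx Sy : Set ι}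
    (hS : Disjoint Sx Sy) (hδ : 0 ≤ δ)
    (hX : ∀ u : Finset ι, ‖∑ r ∈ u, star (x r) * x r‖ ≤ X)
    (hY : ∀ u : Finset ι, ‖∑ r ∈ u, star (y r) * y r‖ ≤ Y)
    (hxδ : ∀ u : Finset ι, Disjoint (u : Set ι) Sx → ‖∑ r ∈ u, star (x r) * x r‖ ≤ δ ^ 2)
    (hyδ : ∀ u : Finset ι, Disjoint (u : Set ι) Sy → ‖∑ r ∈ u, star (y r) * y r‖ ≤ δ ^ 2)
    (t : Finset ι) :
    ‖∑ r ∈ t, star (x r) * y r‖ ≤ δ * (√X + √Y) := by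
  classical
  have in_Sy : Disjoint ((t.filter (· ∈ Sy) : Finset ι) : Set ι) Sx :=
    hS.symm.mono_left fun r hr => (Finset.mem_filter.1 hr).2
  have off_Sy : Disjoint ((t.filter (· ∉ Sy) : Finset ι) : Set ι) Sy :=
    Set.disjoint_left.2 fun r hr => (Finset.mem_filter.1 hr).2
  have sqrt_δ_sq : √(δ ^ 2) = δ := Real.sqrt_sq hδ
  rw [← Finset.sum_filter_add_sum_filter_not t (· ∈ Sy)]
  calc _ ≤ _ := norm_add_le _ _
    _ ≤ √(δ ^ 2) * √Y + √X * √(δ ^ 2) := by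
      gcongr
      · exact (norm_sum_star_mul_le x y _).trans (by gcongr; exacts [hxδ _ in_Sy, hY _])
      · exact (norm_sum_star_mul_le x y _).trans (by gcongr; exacts [hX _, hyδ _ off_Sy])
    _ = δ * (√X + √Y) := by rw [sqrt_δ_sq]; ring

end CStarAlgebra

lemma norm_tsum_le_of_forall_norm_sum_le {E : Type*} [SeminormedAddCommGroup E] {ι : Type*}
    {f : ι → E} {C : ℝ} (h : ∀ t : Finset ι, ‖∑ i ∈ t, f i‖ ≤ C) :
    ‖∑' i, f i‖ ≤ C := by
  by_cases hf : Summable f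
  · exact le_of_tendsto' hf.hasSum.norm h
  · simpa [tsum_eq_zero_of_not_summable hf] using h ∅

lemma norm_regCoeff_le {G A : Type} [Group G] [CStarAlgebra A] [PartialOrder A]
    [StarOrderedRing A] {ξ η : G → A} (hξ2 : Summable fun r => star (ξ r) * ξ r)
    (hη2 : Summable fun r => star (η r) * η r) {δ : ℝ} (hδ : 0 ≤ δ) {Fξ Fη : Finset G}
    (hFξ : ∀ u, Disjoint u Fξ → ‖∑ r ∈ u, star (ξ r) * ξ r‖ ≤ δ ^ 2)
    (hFη : ∀ u, Disjoint u Fη → ‖∑ r ∈ u, star (η r) * η r‖ ≤ δ ^ 2)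
    {s : G} (hs : s ∉ (Fη : Set G) * (Fξ : Set G)⁻¹) {b : A} (hb : ‖b‖ ≤ 1) :
    ‖regCoeff ξ η s b‖ ≤ δ * (√‖∑' r, star (ξ r) * ξ r‖ + √‖∑' r, star (η r) * η r‖) := by
  have translate (u : Finset G) :
      ‖∑ r ∈ u, star (b * ξ (s⁻¹ * r)) * (b * ξ (s⁻¹ * r))‖ ≤
        ‖∑ r ∈ u.map (mulLeftEmbedding s⁻¹), star (ξ r) * ξ r‖ := by
    rw [Finset.sum_map]
    exact norm_sum_star_mul_self_left_mul_le hb (fun r => ξ (s⁻¹ * r)) u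
  have disjoint_translate : Disjoint (s • (Fξ : Set G)) Fη := by
    refine Set.disjoint_left.2 fun r hr hrη => hs ?_
    obtain ⟨q, hq, rfl⟩ := hr
    exact ⟨s * q, hrη, q⁻¹, Set.inv_mem_inv.2 hq, by simp⟩
  refine norm_tsum_le_of_forall_norm_sum_le
    (norm_sum_star_mul_le_of_disjoint_tails disjoint_translate hδ
      (fun u => (translate u).trans (norm_sum_star_mul_self_le_tsum hξ2 _))
      (norm_sum_star_mul_self_le_tsum hη2) (fun u hu => (translate u).trans (hFξ _ ?_))
      (fun u hu => hFη u (by exact_mod_cast hu)))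
  refine Finset.disjoint_left.2 fun r hr hrξ => ?_
  obtain ⟨q, hq, rfl⟩ := Finset.mem_map.1 hr
  exact Set.disjoint_left.1 hu hq ⟨_, hrξ, by simp⟩

theorem fourier_space_vanishes_at_infinity_general
    {G A : Type} [Group G]
    [NormedRing A] [StarRing A] [CStarRing A] [NormedAlgebra ℂ A] [StarModule ℂ A]
    [CompleteSpace A]
    (B : FellBundle G A) (ξ η : G → A)
    (hξ2 : Summable fun r : G => star (ξ r) * ξ r)
    (hη2 : Summable fun r : G => star (η r) * η r)
    (ε : ℝ) (hε : 0 < ε) :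
    {s : G | ∃ b ∈ B.fiber s, ‖b‖ ≤ 1 ∧ ε ≤ ‖regCoeff ξ η s b‖}.Finite := by
  let _ : CStarAlgebra A := {}
  let _ := CStarAlgebra.spectralOrder A
  have := CStarAlgebra.spectralOrderedRing A
  set C := √‖∑' r, star (ξ r) * ξ r‖ + √‖∑' r, star (η r) * η r‖
  set δ := ε / (C + 1)
  have hδ : 0 < δ := by positivity
  have hδC : δ * C < ε := by
    calc δ * C < δ * (C + 1) := by gcongr; linarith
      _ = ε := div_mul_cancel₀ ε (by positivity)
  obtain ⟨Fξ, hFξ⟩ := summable_iff_vanishing_norm.1 hξ2 (δ ^ 2) (by positivity)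
  obtain ⟨Fη, hFη⟩ := summable_iff_vanishing_norm.1 hη2 (δ ^ 2) (by positivity)
  refine (Fη.finite_toSet.mul Fξ.finite_toSet.inv).subset ?_
  rintro s ⟨b, -, hb, hεb⟩
  by_contra hs
  have := norm_regCoeff_le hξ2 hη2 hδ.le (fun u hu => (hFξ u hu).le) (fun u hu => (hFη u hu).le)
    hs hb
  linarith

/-- every element of the Fourier space `A(B)` lies in
`c₀(G, L(B, B_e))`: for `ξ, η ∈ ℓ²(B)`, the coefficient family `λ_{ξ,η}` of the
regular representation vanishes at infinity, i.e. for every `ε > 0` the set of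
`s ∈ G` where `‖λ_{ξ,η,s}‖ ≥ ε` (witnessed on the unit ball of the fiber `B_s`)
is finite. -/
theorem fourier_space_vanishes_at_infinity
    {G A : Type} [Group G]
    [NormedRing A] [StarRing A] [CStarRing A] [NormedAlgebra ℂ A] [StarModule ℂ A]
    [CompleteSpace A]
    (B : FellBundle G A) (ξ η : G → A)
    (hξm : ∀ r, ξ r ∈ B.fiber r) (hηm : ∀ r, η r ∈ B.fiber r)
    (hξ2 : Summable fun r : G => star (ξ r) * ξ r)
    (hη2 : Summable fun r : G => star (η r) * η r)
    (ε : ℝ) (hε : 0 < ε) :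
    {s : G | ∃ b ∈ B.fiber s, ‖b‖ ≤ 1 ∧ ε ≤ ‖regCoeff ξ η s b‖}.Finite :=
  fourier_space_vanishes_at_infinity_general B ξ η hξ2 hη2 ε hε
end

section
/- For the trivial Fell bundle B = G × ℂ over a discrete group G, the map T sending the coefficient family λ_{ξ,η} ∈ A(B) to the function s ↦ ⟨λ^G_s θξ, θη⟩_{ℓ²(G)} ∈ A(G) (where θ(s,z) = z identifies ℓ²(B) with ℓ²(G)) is an isometric algebra isomorphism from A(B) onto the Fourier algebra A(G). -/
/-!
A coefficient family of the trivial bundle is conjugate-linear in each fiber,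
`u_s(z) = z̄ · u_s(1)`, so it is determined by its values at the units and evaluation there
is a bijection onto `A(G)`, multiplicative by the very definition of the product on `A(B)`.
For the norms, `Σ_s u_s(f_s) = Σ_s u_s(1) · f̄_s`, and `‖f̄‖_* = ‖f‖_*`: for a unitary
representation `U` on `H`, the operator `Σ_s f_s Ū_s` of the conjugate representation on the
conjugate Hilbert space `H̄` is `Σ_s f̄_s U_s` acting on the same vectors.
-/

/-- A unitary representation of a discrete group on a Hilbert space. -/
structure URep (G : Type) [Group G] where
  H : Type
  [instN : NormedAddCommGroup H]
  [instI : InnerProductSpace ℂ H]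
  [instC : CompleteSpace H]
  U : G →* (H →L[ℂ] H)
  adj : ∀ s : G, ContinuousLinearMap.adjoint (U s) = U s⁻¹

attribute [instance] URep.instN URep.instI URep.instC

/-- The norm `‖f‖_*` of a finitely supported function, as the supremum over all
unitary representations (for the trivial bundle this is both the bundle norm and the
full group C*-norm). -/
noncomputable def normStarG {G : Type} [Group G] (f : G →₀ ℂ) : ℝ :=
  sSup {x : ℝ | ∃ ρ : URep G, x = ‖∑ s ∈ f.support, f s • ρ.U s‖}

/-- The Fourier algebra `A(G)`: coefficient functions `s ↦ ⟨λ_s ξ, η⟩` of the left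
regular representation of `G` on `ℓ²(G)`. -/
def AGset (G : Type) [Group G] : Set (G → ℂ) :=
  {u | ∃ ξ η : G → ℂ, Memℓp ξ 2 ∧ Memℓp η 2 ∧
    ∀ s : G, u s = ∑' r : G, (starRingEnd ℂ) (ξ (s⁻¹ * r)) * η r}

/-- The Fourier space `A(B)` of the trivial Fell bundle `B = G × ℂ`: coefficient
families `λ_{ξ,η,s} : B_s → B_e`, `(s,z) ↦ ⟨λ_s(s,z)ξ, η⟩`, of the regular
representation (fibers `{s} × ℂ` identified with `ℂ`). -/
def ABtrivSet (G : Type) [Group G] : Set (G → ℂ → ℂ) :=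
  {u | ∃ ξ η : G → ℂ, Memℓp ξ 2 ∧ Memℓp η 2 ∧
    ∀ (s : G) (z : ℂ),
      u s z = (starRingEnd ℂ) z * ∑' r : G, (starRingEnd ℂ) (ξ (s⁻¹ * r)) * η r}

/-- The product on `A(B)` induced by the comultiplication
`Δ_{s,t}(st,z) = (s,z) ⊗ (t,1)` (with the chosen elements `b₀^s = (s,1)`). -/
def ABtrivMul {G : Type} [Group G] (u v : G → ℂ → ℂ) : G → ℂ → ℂ :=
  fun s z => u s z * v s 1

/-- The `A(B)` norm: `‖u‖ = sup {|Σ_s u_s(f_s)| : ‖f‖_* ≤ 1}`. -/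
noncomputable def ABtrivNorm {G : Type} [Group G] (u : G → ℂ → ℂ) : ℝ :=
  sSup {x : ℝ | ∃ f : G →₀ ℂ, normStarG f ≤ 1 ∧
    x = ‖∑ s ∈ f.support, u s (f s)‖}

/-- The `A(G)` norm, defined analogously. -/
noncomputable def AGnorm {G : Type} [Group G] (v : G → ℂ) : ℝ :=
  sSup {x : ℝ | ∃ f : G →₀ ℂ, normStarG f ≤ 1 ∧
    x = ‖∑ s ∈ f.support, v s * f s‖}

open scoped ComplexConjugate

section ConjugateSpace

variable (H : Type) [NormedAddCommGroup H]

/-- The complex conjugate `H̄` of a Hilbert space: the same normed group, with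
`z • x := conj z • x` and `⟪x, y⟫_H̄ := ⟪y, x⟫_H`. -/
def ConjugateSpace : Type := H

instance : NormedAddCommGroup (ConjugateSpace H) := ‹NormedAddCommGroup H›

variable {H}

def toConj : H ≃ ConjugateSpace H := Equiv.refl H

lemma ConjugateSpace.norm_def (x : ConjugateSpace H) : ‖x‖ = ‖toConj.symm x‖ := rfl

variable [InnerProductSpace ℂ H]

noncomputable instance : Module ℂ (ConjugateSpace H) := Module.compHom H (starRingEnd ℂ)

lemma ConjugateSpace.smul_def (z : ℂ) (x : ConjugateSpace H) :
    z • x = toConj (conj z • toConj.symm x) := rfl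

noncomputable instance : NormedSpace ℂ (ConjugateSpace H) where
  norm_smul_le z x := by
    rw [ConjugateSpace.smul_def, ConjugateSpace.norm_def, Equiv.symm_apply_apply, norm_smul,
      Complex.norm_conj, ConjugateSpace.norm_def]

noncomputable instance : InnerProductSpace ℂ (ConjugateSpace H) where
  inner x y := inner ℂ (toConj.symm y) (toConj.symm x)
  norm_sq_eq_re_inner x := InnerProductSpace.norm_sq_eq_re_inner (toConj.symm x)
  conj_inner_symm _ _ := inner_conj_symm _ _
  add_left _ _ _ := inner_add_right _ _ _
  smul_left _ _ _ := inner_smul_right _ _ _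

instance [CompleteSpace H] : CompleteSpace (ConjugateSpace H) := ‹CompleteSpace H›

noncomputable def conjCLM : (H →L[ℂ] H) →ₗ⋆[ℂ] (ConjugateSpace H →L[ℂ] ConjugateSpace H) where
  toFun A :=
    { toFun := fun x => toConj (A (toConj.symm x))
      map_add' := fun x y => A.map_add _ _
      map_smul' := fun z x => A.map_smul (conj z) (toConj.symm x)
      cont := A.cont }
  map_add' A B := rfl
  map_smul' z A := by
    ext x
    change toConj (z • A (toConj.symm x)) = toConj (conj (conj z) • A (toConj.symm x))
    rw [Complex.conj_conj]

@[simp] lemma conjCLM_apply (A : H →L[ℂ] H) (x : ConjugateSpace H) :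
    conjCLM A x = toConj (A (toConj.symm x)) := rfl

lemma norm_conjCLM (A : H →L[ℂ] H) : ‖conjCLM A‖ = ‖A‖ :=
  le_antisymm
    (ContinuousLinearMap.opNorm_le_bound _ (norm_nonneg A) fun _ => A.le_opNorm _)
    (ContinuousLinearMap.opNorm_le_bound _ (norm_nonneg _) fun x =>
      (conjCLM A).le_opNorm (toConj x))

end ConjugateSpace

namespace URep

variable {G : Type} [Group G]

noncomputable def conjugate (ρ : URep G) : URep G where
  H := ConjugateSpace ρ.H
  U :=
    { toFun := fun s => conjCLM (ρ.U s)
      map_one' := by ext x; simp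
      map_mul' := fun s t => by ext x; simp }
  adj s := by
    refine ((ContinuousLinearMap.eq_adjoint_iff _ _).2 fun x y => ?_).symm
    change inner ℂ (toConj.symm y) (ρ.U s⁻¹ (toConj.symm x)) =
      inner ℂ (ρ.U s (toConj.symm y)) (toConj.symm x)
    rw [← ρ.adj, ContinuousLinearMap.adjoint_inner_right]

lemma norm_sum_smul_conjugate_U (ρ : URep G) (t : Finset G) (f : G → ℂ) :
    ‖∑ s ∈ t, f s • ρ.conjugate.U s‖ = ‖∑ s ∈ t, conj (f s) • ρ.U s‖ := by
  have hsum : ∑ s ∈ t, f s • ρ.conjugate.U s = conjCLM (∑ s ∈ t, conj (f s) • ρ.U s) := by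
    simp only [map_sum, map_smulₛₗ, Complex.conj_conj]
    rfl
  rw [hsum]
  exact norm_conjCLM _

end URep

section ConjFinsupp

variable {α : Type*}

noncomputable abbrev conjFinsupp (f : α →₀ ℂ) : α →₀ ℂ :=
  f.mapRange (starRingEnd ℂ) (map_zero _)

lemma support_conjFinsupp (f : α →₀ ℂ) : (conjFinsupp f).support = f.support :=
  Finsupp.support_mapRange_of_injective _ f (starRingEnd ℂ).injective

lemma conjFinsupp_conjFinsupp (f : α →₀ ℂ) : conjFinsupp (conjFinsupp f) = f := by
  ext s
  simp

end ConjFinsupp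

section TrivialBundle

variable {G : Type} [Group G]

lemma normStarG_conjFinsupp (f : G →₀ ℂ) : normStarG (conjFinsupp f) = normStarG f := by
  have hsubset : ∀ f : G →₀ ℂ,
      {x : ℝ | ∃ ρ : URep G, x = ‖∑ s ∈ (conjFinsupp f).support, conjFinsupp f s • ρ.U s‖} ⊆
        {x : ℝ | ∃ ρ : URep G, x = ‖∑ s ∈ f.support, f s • ρ.U s‖} := by
    rintro f x ⟨ρ, rfl⟩
    refine ⟨ρ.conjugate, ?_⟩
    simp [URep.norm_sum_smul_conjugate_U, support_conjFinsupp]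
  unfold normStarG
  congr 1
  refine (hsubset f).antisymm ?_
  simpa only [conjFinsupp_conjFinsupp] using hsubset (conjFinsupp f)

lemma apply_eq_conj_mul_apply_one {u : G → ℂ → ℂ} (hu : u ∈ ABtrivSet G) (s : G) (z : ℂ) :
    u s z = conj z * u s 1 := by
  obtain ⟨ξ, η, -, -, h⟩ := hu
  rw [h s z, h s 1, map_one, one_mul]

lemma sum_apply_eq_sum_apply_one_mul_conjFinsupp {u : G → ℂ → ℂ} (hu : u ∈ ABtrivSet G)
    (f : G →₀ ℂ) :
    ∑ s ∈ f.support, u s (f s) = ∑ s ∈ (conjFinsupp f).support, u s 1 * conjFinsupp f s := by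
  rw [support_conjFinsupp]
  refine Finset.sum_congr rfl fun s _ => ?_
  rw [apply_eq_conj_mul_apply_one hu, Finsupp.mapRange_apply, mul_comm]

lemma AGnorm_apply_one {u : G → ℂ → ℂ} (hu : u ∈ ABtrivSet G) :
    AGnorm (fun s => u s 1) = ABtrivNorm u := by
  unfold AGnorm ABtrivNorm
  congr 1
  ext x
  constructor
  · rintro ⟨f, hf, rfl⟩
    refine ⟨conjFinsupp f, (normStarG_conjFinsupp f).trans_le hf, ?_⟩
    rw [sum_apply_eq_sum_apply_one_mul_conjFinsupp hu, conjFinsupp_conjFinsupp]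
  · rintro ⟨f, hf, rfl⟩
    exact ⟨conjFinsupp f, (normStarG_conjFinsupp f).trans_le hf,
      by rw [sum_apply_eq_sum_apply_one_mul_conjFinsupp hu]⟩

lemma bijOn_apply_one : Set.BijOn (fun u s => u s 1) (ABtrivSet G) (AGset G) := by
  refine ⟨?mapsTo, ?injOn, ?surjOn⟩
  case mapsTo =>
    rintro u ⟨ξ, η, hξ, hη, h⟩
    exact ⟨ξ, η, hξ, hη, fun s => by simpa using h s 1⟩
  case injOn =>
    intro u hu v hv huv
    funext s z
    rw [apply_eq_conj_mul_apply_one hu, apply_eq_conj_mul_apply_one hv]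
    exact congrArg _ (congrFun huv s)
  case surjOn =>
    rintro v ⟨ξ, η, hξ, hη, h⟩
    refine ⟨fun s z => conj z * v s, ⟨ξ, η, hξ, hη, fun s z => by rw [← h s]⟩, ?_⟩
    funext s
    simp

end TrivialBundle

/-- for the trivial Fell bundle `B = G × ℂ` over a discrete group, the
map `T : λ_{ξ,η} ↦ (s ↦ ⟨λ^G_s θξ, θη⟩)` (evaluation of the coefficient family at the
unit of each fiber, via the identification `θ : ℓ²(B) ≅ ℓ²(G)`) is an isometric
algebra isomorphism from `A(B)` onto the Fourier algebra `A(G)`. -/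
theorem trivial_bundle_fourier_space_iso_fourier_algebra (G : Type) [Group G] :
    ∃ T : (G → ℂ → ℂ) → (G → ℂ),
      (∀ u ∈ ABtrivSet G, T u = fun s => u s 1) ∧
      Set.BijOn T (ABtrivSet G) (AGset G) ∧
      (∀ u ∈ ABtrivSet G, ∀ v ∈ ABtrivSet G,
        T (ABtrivMul u v) = fun s => T u s * T v s) ∧
      (∀ u ∈ ABtrivSet G, AGnorm (T u) = ABtrivNorm u) :=
  ⟨fun u s => u s 1, fun _ _ => rfl, bijOn_apply_one, fun _ _ _ _ => rfl,
    fun _ hu => AGnorm_apply_one hu⟩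
end
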